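/- arXiv:2506.10238 — 4 statements merged into one kernel-verified Lean document; each statement's English description precedes it below -/
import Mathlib

section
/- Let F₁ and F₂ be monotone Boolean functions over disjoint finite ground sets V₁ and V₂, and for a monotone F over V with a designated 'free' subset D ⊆ V and repair set R = V \ D, let m_F(i) be the maximum number of satisfying assignments achievable for F when at most i elements of R may be added to D (m_F is the 'bag-set repair profile'). If F = F₁ ∨ F₂ with multiplicities adding, then m_F(i) = max over i₁+i₂=i of m_{F₁}(i₁) + m_{F₂}(i₂); if F = F₁ ∧ F₂ with multiplicities multiplying, then m_F(i) = max over i₁+i₂=i of m_{F₁}(i₁)·m_{F₂}(i₂). -/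
/-- `repairProfile F D R i` is the maximum multiplicity of `F` achievable by
adding at most `i` facts of `R` to `D`. -/
def repairProfile {α : Type*} [DecidableEq α] (F : Finset α → ℕ) (D R : Finset α)
    (i : ℕ) : ℕ :=
  (R.powerset.filter (fun S => S.card ≤ i)).sup (fun S => F (D ∪ S))

lemma key {α : Type*} [DecidableEq α] (op : ℕ → ℕ → ℕ)
    (hop : ∀ {a b c d : ℕ}, a ≤ c → b ≤ d → op a b ≤ op c d)
    (V₁ V₂ : Finset α) (hdisj : Disjoint V₁ V₂)
    (F₁ F₂ : Finset α → ℕ)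
    (hm₁ : ∀ S T : Finset α, S ⊆ T → F₁ S ≤ F₁ T)
    (hm₂ : ∀ S T : Finset α, S ⊆ T → F₂ S ≤ F₂ T)
    (hv₁ : ∀ S, F₁ S = F₁ (S ∩ V₁)) (hv₂ : ∀ S, F₂ S = F₂ (S ∩ V₂))
    (D : Finset α) (i : ℕ) :
    repairProfile (fun S => op (F₁ S) (F₂ S)) D ((V₁ ∪ V₂) \ D) i
      = (Finset.range (i + 1)).sup (fun i₁ =>
          op (repairProfile F₁ (D ∩ V₁) (V₁ \ D) i₁)
            (repairProfile F₂ (D ∩ V₂) (V₂ \ D) (i - i₁))) := by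
  apply le_antisymm
  · apply Finset.sup_le
    intro S hS
    simp only [Finset.mem_filter, Finset.mem_powerset] at hS
    obtain ⟨hSsub, hScard⟩ := hS
    set S₁ := S ∩ V₁ with hS₁
    set S₂ := S ∩ V₂ with hS₂
    have hdisjS : Disjoint S₁ S₂ := hdisj.mono inf_le_right inf_le_right
    have hunion : S₁ ∪ S₂ = S := by
      rw [← Finset.inter_union_distrib_left]
      exact Finset.inter_eq_left.mpr (hSsub.trans Finset.sdiff_subset)
    have hcard : S₁.card + S₂.card = S.card := by
      rw [← Finset.card_union_of_disjoint hdisjS, hunion]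
    have h1 : S₁.card ≤ i := by omega
    have h2 : S₂.card ≤ i - S₁.card := by omega
    have hS₁sub : S₁ ⊆ V₁ \ D := fun x hx => by
      simp only [hS₁, Finset.mem_inter] at hx
      have := hSsub hx.1
      simp only [Finset.mem_sdiff] at this ⊢
      exact ⟨hx.2, this.2⟩
    have hS₂sub : S₂ ⊆ V₂ \ D := fun x hx => by
      simp only [hS₂, Finset.mem_inter] at hx
      have := hSsub hx.1
      simp only [Finset.mem_sdiff] at this ⊢
      exact ⟨hx.2, this.2⟩
    have e1 : F₁ (D ∪ S) = F₁ ((D ∩ V₁) ∪ S₁) := by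
      rw [hv₁ (D ∪ S), Finset.union_inter_distrib_right]
    have e2 : F₂ (D ∪ S) = F₂ ((D ∩ V₂) ∪ S₂) := by
      rw [hv₂ (D ∪ S), Finset.union_inter_distrib_right]
    have le1 : F₁ ((D ∩ V₁) ∪ S₁) ≤ repairProfile F₁ (D ∩ V₁) (V₁ \ D) S₁.card := by
      unfold repairProfile
      exact Finset.le_sup (f := fun S => F₁ ((D ∩ V₁) ∪ S)) (Finset.mem_filter.mpr ⟨Finset.mem_powerset.mpr hS₁sub, le_rfl⟩)
    have le2 : F₂ ((D ∩ V₂) ∪ S₂) ≤ repairProfile F₂ (D ∩ V₂) (V₂ \ D) (i - S₁.card) := by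
      unfold repairProfile
      exact Finset.le_sup (f := fun S => F₂ ((D ∩ V₂) ∪ S)) (Finset.mem_filter.mpr ⟨Finset.mem_powerset.mpr hS₂sub, h2⟩)
    calc op (F₁ (D ∪ S)) (F₂ (D ∪ S)) ≤ op (repairProfile F₁ (D ∩ V₁) (V₁ \ D) S₁.card)
          (repairProfile F₂ (D ∩ V₂) (V₂ \ D) (i - S₁.card)) := by
          rw [e1, e2]; exact hop le1 le2
      _ ≤ _ := Finset.le_sup (f := fun i₁ => op (repairProfile F₁ (D ∩ V₁) (V₁ \ D) i₁)
            (repairProfile F₂ (D ∩ V₂) (V₂ \ D) (i - i₁)))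
          (Finset.mem_range.mpr (by omega))
  · apply Finset.sup_le
    intro i₁ hi₁
    rw [Finset.mem_range] at hi₁
    have hne₁ : ((V₁ \ D).powerset.filter (fun S => S.card ≤ i₁)).Nonempty :=
      ⟨∅, by simp⟩
    have hne₂ : ((V₂ \ D).powerset.filter (fun S => S.card ≤ i - i₁)).Nonempty :=
      ⟨∅, by simp⟩
    obtain ⟨S₁, hS₁mem, hS₁eq⟩ := Finset.exists_mem_eq_sup _ hne₁ (fun S => F₁ ((D ∩ V₁) ∪ S))
    obtain ⟨S₂, hS₂mem, hS₂eq⟩ := Finset.exists_mem_eq_sup _ hne₂ (fun S => F₂ ((D ∩ V₂) ∪ S))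
    simp only [Finset.mem_filter, Finset.mem_powerset] at hS₁mem hS₂mem
    set S := S₁ ∪ S₂ with hS
    have hSsub : S ⊆ (V₁ ∪ V₂) \ D := Finset.union_subset
      (hS₁mem.1.trans (Finset.sdiff_subset_sdiff Finset.subset_union_left le_rfl))
      (hS₂mem.1.trans (Finset.sdiff_subset_sdiff Finset.subset_union_right le_rfl))
    have hScard : S.card ≤ i := by
      calc S.card ≤ S₁.card + S₂.card := Finset.card_union_le _ _
        _ ≤ i := by omega
    have e1 : F₁ ((D ∩ V₁) ∪ S₁) ≤ F₁ (D ∪ S) := by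
      rw [hv₁ (D ∪ S), Finset.union_inter_distrib_right]
      apply hm₁
      apply Finset.union_subset_union le_rfl
      rw [Finset.subset_inter_iff]
      exact ⟨Finset.subset_union_left,
        hS₁mem.1.trans Finset.sdiff_subset⟩
    have e2 : F₂ ((D ∩ V₂) ∪ S₂) ≤ F₂ (D ∪ S) := by
      rw [hv₂ (D ∪ S), Finset.union_inter_distrib_right]
      apply hm₂
      apply Finset.union_subset_union le_rfl
      rw [Finset.subset_inter_iff]
      exact ⟨Finset.subset_union_right,
        hS₂mem.1.trans Finset.sdiff_subset⟩
    calc op (repairProfile F₁ (D ∩ V₁) (V₁ \ D) i₁)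
          (repairProfile F₂ (D ∩ V₂) (V₂ \ D) (i - i₁))
        = op (F₁ ((D ∩ V₁) ∪ S₁)) (F₂ ((D ∩ V₂) ∪ S₂)) := by
          rw [repairProfile, repairProfile, ← hS₁eq, ← hS₂eq]
      _ ≤ op (F₁ (D ∪ S)) (F₂ (D ∪ S)) := hop e1 e2
      _ ≤ _ := by
          unfold repairProfile
          exact Finset.le_sup (f := fun S => op (F₁ (D ∪ S)) (F₂ (D ∪ S))) (Finset.mem_filter.mpr ⟨Finset.mem_powerset.mpr hSsub, hScard⟩)

/-- The bag-set repair profile of a sum (disjunction) of multiplicities over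
disjoint ground sets is the max-plus convolution of the profiles; the profile
of a product (conjunction) is the max-times convolution. -/
theorem stmt_14 {α : Type*} [DecidableEq α] (V₁ V₂ : Finset α) (hdisj : Disjoint V₁ V₂)
    (F₁ F₂ : Finset α → ℕ)
    (hm₁ : ∀ S T : Finset α, S ⊆ T → F₁ S ≤ F₁ T)
    (hm₂ : ∀ S T : Finset α, S ⊆ T → F₂ S ≤ F₂ T)
    (hv₁ : ∀ S, F₁ S = F₁ (S ∩ V₁)) (hv₂ : ∀ S, F₂ S = F₂ (S ∩ V₂))
    (D : Finset α) (hD : D ⊆ V₁ ∪ V₂) (i : ℕ) :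
    (repairProfile (fun S => F₁ S + F₂ S) D ((V₁ ∪ V₂) \ D) i
      = (Finset.range (i + 1)).sup (fun i₁ =>
          repairProfile F₁ (D ∩ V₁) (V₁ \ D) i₁
            + repairProfile F₂ (D ∩ V₂) (V₂ \ D) (i - i₁))) ∧
    (repairProfile (fun S => F₁ S * F₂ S) D ((V₁ ∪ V₂) \ D) i
      = (Finset.range (i + 1)).sup (fun i₁ =>
          repairProfile F₁ (D ∩ V₁) (V₁ \ D) i₁
            * repairProfile F₂ (D ∩ V₂) (V₂ \ D) (i - i₁))) :=
  ⟨key (· + ·) (fun h1 h2 => Nat.add_le_add h1 h2) V₁ V₂ hdisj F₁ F₂ hm₁ hm₂ hv₁ hv₂ D i,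
   key (· * ·) (fun h1 h2 => Nat.mul_le_mul h1 h2) V₁ V₂ hdisj F₁ F₂ hm₁ hm₂ hv₁ hv₂ D i⟩
end

section
/- Suppose the elimination procedure for a self-join-free Boolean conjunctive query Q applies Rule 1 (remove a variable occurring in exactly one atom) or Rule 2 (merge two atoms with identical variable sets into one). Then the resulting query is hierarchical if and only if Q is hierarchical. -/
/-- A query (given by the variable sets of its atoms, indexed by `A`) is
hierarchical if for any two variables, their sets of atoms are comparable or disjoint. -/
def Hierarchical {A V : Type*} (vars : A → Finset V) : Prop :=
  ∀ X Y : V, {a | X ∈ vars a} ⊆ {a | Y ∈ vars a} ∨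
    {a | Y ∈ vars a} ⊆ {a | X ∈ vars a} ∨
    {a | X ∈ vars a} ∩ {a | Y ∈ vars a} = ∅

/-- Rule 1 (removing a variable occurring in exactly one atom) and Rule 2
(merging two atoms with identical variable sets) preserve and reflect the
hierarchical property. -/
theorem stmt_17 {A V : Type*} [DecidableEq A] [DecidableEq V] (vars : A → Finset V) :
    (∀ (a₀ : A) (Y : V), (∀ a, Y ∈ vars a ↔ a = a₀) →
      (Hierarchical (fun a => if a = a₀ then (vars a₀).erase Y else vars a)
        ↔ Hierarchical vars)) ∧
    (∀ a₁ a₂ : A, a₁ ≠ a₂ → vars a₁ = vars a₂ →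
      (Hierarchical (fun a : {a : A // a ≠ a₂} => vars a.1) ↔ Hierarchical vars)) := by
  constructor
  · intro a₀ Y hY
    have key : ∀ X : V, X ≠ Y →
        {a | X ∈ (if a = a₀ then (vars a₀).erase Y else vars a)} = {a | X ∈ vars a} := by
      intro X hX
      ext a
      simp only [Set.mem_setOf_eq]
      by_cases h : a = a₀
      · subst h; simp [Finset.mem_erase, hX]
      · simp [h]
    constructor
    · intro h X Z
      by_cases hX : X = Y
      · subst hX
        by_cases hZ : Z ∈ vars a₀
        · left
          intro a ha
          simp only [Set.mem_setOf_eq] at ha ⊢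
          have := (hY a).mp ha
          subst this; exact hZ
        · right; right
          rw [Set.eq_empty_iff_forall_notMem]
          rintro a ⟨h1, h2⟩
          simp only [Set.mem_setOf_eq] at h1 h2
          have := (hY a).mp h1; subst this; exact hZ h2
      · by_cases hZ : Z = Y
        · subst hZ
          by_cases hX2 : X ∈ vars a₀
          · right; left
            intro a ha
            simp only [Set.mem_setOf_eq] at ha ⊢
            have := (hY a).mp ha; subst this; exact hX2
          · right; right
            rw [Set.eq_empty_iff_forall_notMem]
            rintro a ⟨h1, h2⟩
            simp only [Set.mem_setOf_eq] at h1 h2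
            have := (hY a).mp h2; subst this; exact hX2 h1
        · have := h X Z
          rwa [key X hX, key Z hZ] at this
    · intro h X Z
      by_cases hX : X = Y
      · subst hX
        left
        intro a ha
        simp only [Set.mem_setOf_eq] at ha
        split at ha
        · exact absurd (Finset.mem_erase.mp ha).1 (by simp)
        · exact absurd ((hY a).mp ha) (by assumption)
      · by_cases hZ : Z = Y
        · subst hZ
          right; left
          intro a ha
          simp only [Set.mem_setOf_eq] at ha
          split at ha
          · exact absurd (Finset.mem_erase.mp ha).1 (by simp)
          · exact absurd ((hY a).mp ha) (by assumption)
        · rw [key X hX, key Z hZ]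
          exact h X Z
  · intro a₁ a₂ hne hv
    constructor
    · intro h X Z
      rcases h X Z with hs | hs | hs
      · left
        intro a ha
        simp only [Set.mem_setOf_eq] at ha ⊢
        by_cases he : a = a₂
        · subst he
          have : X ∈ vars a₁ := by rw [hv]; exact ha
          have := hs (a := ⟨a₁, hne⟩) this
          rw [← hv]; exact this
        · exact hs (a := ⟨a, he⟩) ha
      · right; left
        intro a ha
        simp only [Set.mem_setOf_eq] at ha ⊢
        by_cases he : a = a₂
        · subst he
          have : Z ∈ vars a₁ := by rw [hv]; exact ha
          have := hs (a := ⟨a₁, hne⟩) this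
          rw [← hv]; exact this
        · exact hs (a := ⟨a, he⟩) ha
      · right; right
        rw [Set.eq_empty_iff_forall_notMem]
        rintro a ⟨h1, h2⟩
        simp only [Set.mem_setOf_eq] at h1 h2
        rw [Set.eq_empty_iff_forall_notMem] at hs
        by_cases he : a = a₂
        · subst he
          exact hs ⟨a₁, hne⟩ ⟨by simp only [Set.mem_setOf_eq]; rw [hv]; exact h1, by simp only [Set.mem_setOf_eq]; rw [hv]; exact h2⟩
        · exact hs ⟨a, he⟩ ⟨h1, h2⟩
    · intro h X Z
      rcases h X Z with hs | hs | hs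
      · left
        rintro ⟨a, ha⟩ hm
        exact hs hm
      · right; left
        rintro ⟨a, ha⟩ hm
        exact hs hm
      · right; right
        rw [Set.eq_empty_iff_forall_notMem]
        rintro ⟨a, ha⟩ ⟨h1, h2⟩
        rw [Set.eq_empty_iff_forall_notMem] at hs
        exact hs a ⟨h1, h2⟩
end

section
/- If Q is a hierarchical self-join-free Boolean conjunctive query that is not of the form Q() :- R() (a single nullary atom), then either some variable of Q occurs in exactly one atom (Rule 1 applies), or some two distinct atoms of Q have the same variable set (Rule 2 applies). -/
/-!
Unless every atom is nullary, pick a variable `X` whose atom set `at(X)` is minimal among the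
nonempty ones. Any variable `Y` sharing an atom with `X` has `at(Y)` comparable with `at(X)`, so
by minimality `at(X) ⊆ at(Y)`. Hence all atoms of `at(X)` have the same variables: either
`at(X)` is a single atom (Rule 1) or it contains two atoms with equal variable sets (Rule 2).
If every atom is nullary, there are at least two atoms and Rule 2 applies.
-/

namespace Hierarchical

variable {A V : Type*} {vars : A → Finset V}

/-- The set `at(X)` of the paper. -/
def atoms (vars : A → Finset V) (X : V) : Set A := {a | X ∈ vars a}

@[simp]
lemma mem_atoms {X : V} {a : A} : a ∈ atoms vars X ↔ X ∈ vars a := Iff.rfl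

lemma exists_minimalFor_atoms [Finite A] (h : ∃ a X, X ∈ vars a) :
    ∃ X, MinimalFor (fun X ↦ (atoms vars X).Nonempty) (atoms vars) X :=
  let ⟨a, X, hX⟩ := h
  exists_minimalFor_of_wellFoundedLT _ _ ⟨X, a, hX⟩

variable {X Y : V} {a b : A}

lemma atoms_subset_of_minimalFor (hhier : Hierarchical vars)
    (hX : MinimalFor (fun X ↦ (atoms vars X).Nonempty) (atoms vars) X)
    (haX : X ∈ vars a) (haY : Y ∈ vars a) : atoms vars X ⊆ atoms vars Y := by
  rcases hhier X Y with hXY | hYX | hdisj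
  · exact hXY
  · exact hX.2 ⟨a, haY⟩ hYX
  · exact (hdisj.subset ⟨haX, haY⟩).elim

lemma vars_eq_of_minimalFor (hhier : Hierarchical vars)
    (hX : MinimalFor (fun X ↦ (atoms vars X).Nonempty) (atoms vars) X)
    (ha : X ∈ vars a) (hb : X ∈ vars b) : vars a = vars b := by
  ext Y
  exact ⟨fun hY ↦ hhier.atoms_subset_of_minimalFor hX ha hY hb,
    fun hY ↦ hhier.atoms_subset_of_minimalFor hX hb hY ha⟩

end Hierarchical

theorem stmt_18_general {A V : Type*} [Fintype A]
    (vars : A → Finset V) (hhier : Hierarchical vars)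
    (h : ¬ ((∀ a b : A, a = b) ∧ ∀ a : A, vars a = ∅)) :
    (∃ (Y : V) (a₀ : A), ∀ a, Y ∈ vars a ↔ a = a₀) ∨
    (∃ a₁ a₂ : A, a₁ ≠ a₂ ∧ vars a₁ = vars a₂) := by
  by_cases hvar : ∃ a X, X ∈ vars a
  · obtain ⟨X, hX⟩ := Hierarchical.exists_minimalFor_atoms hvar
    obtain ⟨a₀, ha₀⟩ := hX.1
    by_cases hsingle : ∀ a, X ∈ vars a → a = a₀
    · exact .inl ⟨X, a₀, fun a ↦ ⟨hsingle a, fun e ↦ e ▸ ha₀⟩⟩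
    · push Not at hsingle
      obtain ⟨a, ha, hne⟩ := hsingle
      exact .inr ⟨a, a₀, hne, hhier.vars_eq_of_minimalFor hX ha ha₀⟩
  · push Not at hvar
    have hempty (a : A) : vars a = ∅ := Finset.eq_empty_of_forall_notMem (hvar a)
    obtain ⟨a, b, hab⟩ : ∃ a b : A, a ≠ b := by simpa [hempty] using h
    exact .inr ⟨a, b, hab, by rw [hempty a, hempty b]⟩

/-- If a hierarchical query is not a single nullary atom, then Rule 1 or
Rule 2 applies. -/
theorem stmt_18 {A V : Type*} [Fintype A] [Nonempty A] [DecidableEq V]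
    (vars : A → Finset V) (hhier : Hierarchical vars)
    (h : ¬ ((∀ a b : A, a = b) ∧ ∀ a : A, vars a = ∅)) :
    (∃ (Y : V) (a₀ : A), ∀ a, Y ∈ vars a ↔ a = a₀) ∨
    (∃ a₁ a₂ : A, a₁ ≠ a₂ ∧ vars a₁ = vars a₂) :=
  stmt_18_general vars hhier h
end

section
/- A connected hierarchical self-join-free Boolean conjunctive query Q with at least one variable admits a rooted tree T on vertex set vars(Q) such that for every atom R(X̄) of Q there is a node Y whose root-path vertex set (including Y and the root) is exactly X̄; conversely, the existence of such a tree implies Q is hierarchical. -/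
namespace Stmt19Aux

open Classical

variable {A V : Type*} [Fintype A] [DecidableEq V]

/-- The set of atoms containing a variable. -/
def atF (vars : A → Finset V) (Y : V) : Finset A :=
  Finset.univ.filter (fun a => Y ∈ vars a)

lemma mem_atF {vars : A → Finset V} {Y : V} {a : A} :
    a ∈ atF vars Y ↔ Y ∈ vars a := by simp [atF]

/-- The strict order on variables: strictly larger atom set, with ties broken by
a well-ordering of `V`. -/
def L (vars : A → Finset V) (Y Z : V) : Prop :=
  atF vars Y ⊂ atF vars Z ∨ (atF vars Y = atF vars Z ∧ WellOrderingRel Y Z)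

lemma L_irrefl (vars : A → Finset V) (Y : V) : ¬ L vars Y Y := by
  rintro (h | ⟨-, h⟩)
  · exact ssubset_irrefl _ h
  · exact irrefl_of WellOrderingRel Y h

lemma L_trans {vars : A → Finset V} {X Y Z : V} (h1 : L vars X Y) (h2 : L vars Y Z) :
    L vars X Z := by
  rcases h1 with h1 | ⟨e1, w1⟩ <;> rcases h2 with h2 | ⟨e2, w2⟩
  · exact Or.inl (h1.trans h2)
  · exact Or.inl (e2 ▸ h1)
  · exact Or.inl (e1 ▸ h2)
  · exact Or.inr ⟨e1.trans e2, trans_of WellOrderingRel w1 w2⟩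

lemma L_mono {vars : A → Finset V} {Y Z : V} (h : L vars Y Z) :
    atF vars Y ⊆ atF vars Z := by
  rcases h with h | ⟨e, -⟩
  · exact h.subset
  · exact e ▸ Finset.Subset.refl _

lemma L_tric {vars : A → Finset V} (hier : Hierarchical vars) {Y Z : V}
    (h : (atF vars Y ∩ atF vars Z).Nonempty) :
    L vars Y Z ∨ Y = Z ∨ L vars Z Y := by
  obtain ⟨a, ha⟩ := h
  rw [Finset.mem_inter] at ha
  have key : atF vars Y ⊆ atF vars Z ∨ atF vars Z ⊆ atF vars Y := by
    rcases hier Y Z with h | h | h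
    · exact Or.inl (fun b hb => mem_atF.2 (h (mem_atF.1 hb)))
    · exact Or.inr (fun b hb => mem_atF.2 (h (mem_atF.1 hb)))
    · exfalso
      have : a ∈ ({a | Y ∈ vars a} ∩ {a | Z ∈ vars a} : Set A) :=
        ⟨mem_atF.1 ha.1, mem_atF.1 ha.2⟩
      rw [h] at this
      exact this
  by_cases he : atF vars Y = atF vars Z
  · rcases trichotomous_of WellOrderingRel Y Z with w | w | w
    · exact Or.inl (Or.inr ⟨he, w⟩)
    · exact Or.inr (Or.inl w)
    · exact Or.inr (Or.inr (Or.inr ⟨he.symm, w⟩))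
  · rcases key with k | k
    · exact Or.inl (Or.inl (Finset.ssubset_iff_subset_ne.2 ⟨k, he⟩))
    · exact Or.inr (Or.inr (Or.inl (Finset.ssubset_iff_subset_ne.2
        ⟨k, fun e => he e.symm⟩)))

/-- The strict upper set of a variable inside `W`. -/
noncomputable def UU (vars : A → Finset V) (W : Finset V) (Y : V) : Finset V :=
  W.filter (fun Z => L vars Y Z)

lemma mem_UU {vars : A → Finset V} {W : Finset V} {Y Z : V} :
    Z ∈ UU vars W Y ↔ Z ∈ W ∧ L vars Y Z := Finset.mem_filter

lemma UU_subset {vars : A → Finset V} {W : Finset V} {Y Z : V} (h : L vars Y Z) :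
    UU vars W Z ⊆ UU vars W Y :=
  fun X hX => mem_UU.2 ⟨(mem_UU.1 hX).1, L_trans h (mem_UU.1 hX).2⟩

lemma UU_card_lt {vars : A → Finset V} {W : Finset V} {Y Z : V}
    (hZ : Z ∈ W) (h : L vars Y Z) :
    (UU vars W Z).card < (UU vars W Y).card := by
  refine Finset.card_lt_card (Finset.ssubset_def.2 ⟨UU_subset h, fun hs => ?_⟩)
  exact L_irrefl vars Z (mem_UU.1 (hs (mem_UU.2 ⟨hZ, h⟩))).2

/-- The parent map: the minimum of the strict upper set (a chain), characterized
as the element with the largest strict upper set. -/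
noncomputable def par (vars : A → Finset V) (W : Finset V) (Y : V) : V :=
  if h : (UU vars W Y).Nonempty then
    ((UU vars W Y).exists_max_image (fun Z => (UU vars W Z).card) h).choose
  else Y

lemma par_spec {vars : A → Finset V} {W : Finset V} {Y : V}
    (h : (UU vars W Y).Nonempty) :
    par vars W Y ∈ UU vars W Y ∧
      ∀ X ∈ UU vars W Y, (UU vars W X).card ≤ (UU vars W (par vars W Y)).card := by
  unfold par
  rw [dif_pos h]
  exact ((UU vars W Y).exists_max_image (fun Z => (UU vars W Z).card) h).choose_spec

lemma par_empty {vars : A → Finset V} {W : Finset V} {Y : V}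
    (h : ¬ (UU vars W Y).Nonempty) : par vars W Y = Y :=
  dif_neg h

lemma par_min {vars : A → Finset V} {W : Finset V} (hier : Hierarchical vars)
    {Y : V} (hat : (atF vars Y).Nonempty)
    (hne : (UU vars W Y).Nonempty) {X : V} (hX : X ∈ UU vars W Y)
    (hXp : X ≠ par vars W Y) : L vars (par vars W Y) X := by
  obtain ⟨hpmem, hpmax⟩ := par_spec hne
  have hint : (atF vars X ∩ atF vars (par vars W Y)).Nonempty := by
    obtain ⟨a, ha⟩ := hat
    exact ⟨a, Finset.mem_inter.2 ⟨L_mono (mem_UU.1 hX).2 ha, L_mono (mem_UU.1 hpmem).2 ha⟩⟩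
  rcases L_tric hier hint with h | h | h
  · exact absurd (hpmax X hX) (not_le.2 (UU_card_lt (mem_UU.1 hpmem).1 h))
  · exact absurd h hXp
  · exact h

lemma UU_par {vars : A → Finset V} {W : Finset V} (hier : Hierarchical vars)
    {Y : V} (hat : (atF vars Y).Nonempty) (hne : (UU vars W Y).Nonempty) :
    UU vars W (par vars W Y) = (UU vars W Y).erase (par vars W Y) := by
  obtain ⟨hpmem, -⟩ := par_spec hne
  ext X
  rw [Finset.mem_erase]
  constructor
  · intro hX
    have h1 := mem_UU.1 hX
    refine ⟨fun e => absurd h1.2 ?_, mem_UU.2 ⟨h1.1, L_trans (mem_UU.1 hpmem).2 h1.2⟩⟩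
    rw [e]
    exact L_irrefl vars _
  · rintro ⟨hne', hX⟩
    exact mem_UU.2 ⟨(mem_UU.1 hX).1, par_min hier hat hne hX hne'⟩

lemma iterate_card {vars : A → Finset V} {W : Finset V} (hier : Hierarchical vars)
    (hatW : ∀ Z ∈ W, (atF vars Z).Nonempty) :
    ∀ (n : ℕ) (Y : V), Y ∈ W → (UU vars W Y).card = n →
      (par vars W)^[n] Y ∈ W ∧ UU vars W ((par vars W)^[n] Y) = ∅ := by
  intro n
  induction n with
  | zero => intro Y hY hc; exact ⟨hY, Finset.card_eq_zero.1 hc⟩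
  | succ n ih =>
    intro Y hY hc
    have hne : (UU vars W Y).Nonempty := Finset.card_pos.1 (by omega)
    have hp := (par_spec (vars := vars) (W := W) hne).1
    have hpW : par vars W Y ∈ W := (mem_UU.1 hp).1
    have hcard : (UU vars W (par vars W Y)).card = n := by
      rw [UU_par hier (hatW Y hY) hne, Finset.card_erase_of_mem hp, hc]
      omega
    rw [Function.iterate_succ_apply]
    exact ih _ hpW hcard

lemma iterate_mem {vars : A → Finset V} {W : Finset V} (hier : Hierarchical vars)
    (hatW : ∀ Z ∈ W, (atF vars Z).Nonempty) :
    ∀ (n : ℕ) (Y : V), Y ∈ W → (par vars W)^[n] Y ∈ insert Y (UU vars W Y) := by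
  intro n
  induction n with
  | zero => intro Y _; simp
  | succ n ih =>
    intro Y hY
    rw [Function.iterate_succ_apply]
    by_cases hne : (UU vars W Y).Nonempty
    · have hp := (par_spec (vars := vars) (W := W) hne).1
      have hmem := ih (par vars W Y) (mem_UU.1 hp).1
      rw [UU_par hier (hatW Y hY) hne] at hmem
      rcases Finset.mem_insert.1 hmem with h | h
      · exact Finset.mem_insert.2 (Or.inr (by rw [h]; exact hp))
      · exact Finset.mem_insert.2 (Or.inr (Finset.erase_subset _ _ h))
    · rw [par_empty hne]; exact ih Y hY

lemma mem_iterate {vars : A → Finset V} {W : Finset V} (hier : Hierarchical vars)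
    (hatW : ∀ Z ∈ W, (atF vars Z).Nonempty) :
    ∀ (n : ℕ) (Y : V), Y ∈ W → (UU vars W Y).card = n →
      ∀ z ∈ UU vars W Y, ∃ m, (par vars W)^[m] Y = z := by
  intro n
  induction n with
  | zero =>
    intro Y _ hc z hz
    rw [Finset.card_eq_zero.1 hc] at hz
    simp at hz
  | succ n ih =>
    intro Y hY hc z hz
    have hne : (UU vars W Y).Nonempty := ⟨z, hz⟩
    have hp := (par_spec (vars := vars) (W := W) hne).1
    by_cases hzp : z = par vars W Y
    · exact ⟨1, by rw [Function.iterate_one, hzp]⟩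
    · have hz' : z ∈ UU vars W (par vars W Y) := by
        rw [UU_par hier (hatW Y hY) hne]
        exact Finset.mem_erase.2 ⟨hzp, hz⟩
      have hcard : (UU vars W (par vars W Y)).card = n := by
        rw [UU_par hier (hatW Y hY) hne, Finset.card_erase_of_mem hp, hc]
        omega
      obtain ⟨m, hm⟩ := ih _ (mem_UU.1 hp).1 hcard z hz'
      exact ⟨m + 1, by rw [Function.iterate_add_apply, Function.iterate_one]; exact hm⟩

lemma exists_root {vars : A → Finset V} {W : Finset V} (hier : Hierarchical vars)
    (hW : ∀ Z : V, Z ∈ W ↔ ∃ a, Z ∈ vars a)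
    (hconn : ∀ a b : A,
      Relation.ReflTransGen (fun x y : A => ((vars x) ∩ (vars y)).Nonempty) a b)
    (hne : ∃ (a : A) (Y : V), Y ∈ vars a) :
    ∃ r ∈ W, atF vars r = Finset.univ ∧ ∀ Z ∈ W, Z ≠ r → L vars Z r := by
  obtain ⟨a0, Y0, hY0⟩ := hne
  have hY0W : Y0 ∈ W := (hW Y0).2 ⟨a0, hY0⟩
  obtain ⟨X, hXW, hXmax⟩ := W.exists_max_image (fun Z => (atF vars Z).card) ⟨Y0, hY0W⟩
  obtain ⟨aX, haX⟩ : (atF vars X).Nonempty := by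
    obtain ⟨a, ha⟩ := (hW X).1 hXW
    exact ⟨a, mem_atF.2 ha⟩
  have hXuniv : atF vars X = Finset.univ := by
    rw [Finset.eq_univ_iff_forall]
    intro b
    have key : ∀ c, Relation.ReflTransGen
        (fun x y : A => ((vars x) ∩ (vars y)).Nonempty) aX c → c ∈ atF vars X := by
      intro c hc
      induction hc with
      | refl => exact haX
      | @tail c d _ h2 ih =>
        obtain ⟨Z, hZ⟩ := h2
        rw [Finset.mem_inter] at hZ
        rcases hier Z X with hs | hs | hs
        · exact mem_atF.2 (hs hZ.2)
        · have hZW : Z ∈ W := (hW Z).2 ⟨c, hZ.1⟩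
          have hsub : atF vars X ⊆ atF vars Z :=
            fun b hb => mem_atF.2 (hs (mem_atF.1 hb))
          have heq : atF vars X = atF vars Z :=
            Finset.eq_of_subset_of_card_le hsub (hXmax Z hZW)
          have hd : d ∈ atF vars Z := mem_atF.2 hZ.2
          rwa [← heq] at hd
        · exfalso
          have hmem : c ∈ ({a | Z ∈ vars a} ∩ {a | X ∈ vars a} : Set A) :=
            ⟨hZ.1, mem_atF.1 ih⟩
          rw [hs] at hmem
          exact hmem
    exact key b (hconn aX b)
  set S := W.filter (fun Z => atF vars Z = Finset.univ) with hS
  have hXS : X ∈ S := Finset.mem_filter.2 ⟨hXW, hXuniv⟩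
  obtain ⟨r, hrS, hrmax⟩ := S.exists_max_image
      (fun z => (S.filter (fun x => WellOrderingRel x z)).card) ⟨X, hXS⟩
  have hrW : r ∈ W := (Finset.mem_filter.1 hrS).1
  have hruniv : atF vars r = Finset.univ := (Finset.mem_filter.1 hrS).2
  refine ⟨r, hrW, hruniv, ?_⟩
  intro Z hZW hZr
  have hsub : atF vars Z ⊆ atF vars r := hruniv ▸ Finset.subset_univ _
  by_cases he : atF vars Z = atF vars r
  · have hZS : Z ∈ S := Finset.mem_filter.2 ⟨hZW, he.trans hruniv⟩
    rcases trichotomous_of WellOrderingRel Z r with w | w | w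
    · exact Or.inr ⟨he, w⟩
    · exact absurd w hZr
    · exfalso
      have hsub2 : insert r (S.filter (fun x => WellOrderingRel x r)) ⊆
          S.filter (fun x => WellOrderingRel x Z) := by
        intro x hx
        rcases Finset.mem_insert.1 hx with h | h
        · exact Finset.mem_filter.2 ⟨by rw [h]; exact hrS, by rw [h]; exact w⟩
        · have hm := Finset.mem_filter.1 h
          exact Finset.mem_filter.2 ⟨hm.1, trans_of WellOrderingRel hm.2 w⟩
      have hrnot : r ∉ S.filter (fun x => WellOrderingRel x r) := by
        intro h
        exact irrefl_of WellOrderingRel r (Finset.mem_filter.1 h).2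
      have hle := Finset.card_le_card hsub2
      rw [Finset.card_insert_of_notMem hrnot] at hle
      have hge := hrmax Z hZS
      omega
  · exact Or.inl (Finset.ssubset_iff_subset_ne.2 ⟨hsub, he⟩)

end Stmt19Aux

/-- A connected hierarchical query with at least one variable admits a rooted
tree (encoded by a root `r` and a parent map `p`) on its variable set `W` such
that every atom's variable set is the vertex set of a root-path; conversely,
the existence of such a tree implies the query is hierarchical. -/
theorem stmt_19 {A V : Type*} [Fintype A] [DecidableEq V] (vars : A → Finset V)
    (W : Finset V) (hW : W = Finset.univ.biUnion vars) :
    ((∀ a b : A, Relation.ReflTransGen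
        (fun x y : A => ((vars x) ∩ (vars y)).Nonempty) a b) →
      (∃ (a : A) (Y : V), Y ∈ vars a) →
      Hierarchical vars →
      ∃ (r : V) (p : V → V), r ∈ W ∧ (∀ y ∈ W, p y ∈ W) ∧ p r = r ∧
        (∀ y ∈ W, ∃ n : ℕ, p^[n] y = r) ∧
        (∀ a : A, ∃ Y ∈ W, {z : V | ∃ n : ℕ, p^[n] Y = z} = ↑(vars a))) ∧
    (∀ (r : V) (p : V → V), r ∈ W → (∀ y ∈ W, p y ∈ W) → p r = r →
        (∀ y ∈ W, ∃ n : ℕ, p^[n] y = r) →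
        (∀ a : A, ∃ Y ∈ W, {z : V | ∃ n : ℕ, p^[n] Y = z} = ↑(vars a)) →
        Hierarchical vars) := by
  classical
  open Stmt19Aux in
  constructor
  · intro hconn hne hier
    have hW' : ∀ Z : V, Z ∈ W ↔ ∃ a, Z ∈ vars a := by
      intro Z
      rw [hW]
      simp [Finset.mem_biUnion]
    have hatW : ∀ Z ∈ W, (atF vars Z).Nonempty := by
      intro Z hZ
      obtain ⟨a, ha⟩ := (hW' Z).1 hZ
      exact ⟨a, mem_atF.2 ha⟩
    obtain ⟨r, hrW, hruniv, hrtop⟩ := exists_root hier hW' hconn hne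
    have hUUr : UU vars W r = ∅ := by
      rw [Finset.eq_empty_iff_forall_notMem]
      intro Z hZ
      obtain ⟨hZW, hL⟩ := mem_UU.1 hZ
      have hZr : Z ≠ r := by
        intro e
        rw [e] at hL
        exact L_irrefl vars r hL
      exact L_irrefl vars r (L_trans hL (hrtop Z hZW hZr))
    refine ⟨r, par vars W, hrW, ?_, ?_, ?_, ?_⟩
    · intro y hy
      by_cases h : (UU vars W y).Nonempty
      · exact (mem_UU.1 (par_spec h).1).1
      · rw [par_empty h]; exact hy
    · exact par_empty (by rw [hUUr]; simp)
    · intro y hy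
      refine ⟨(UU vars W y).card, ?_⟩
      obtain ⟨hmem, hempty⟩ := iterate_card hier hatW _ y hy rfl
      by_contra hne'
      have hL := hrtop _ hmem hne'
      have hmem2 : r ∈ UU vars W ((par vars W)^[(UU vars W y).card] y) :=
        mem_UU.2 ⟨hrW, hL⟩
      rw [hempty] at hmem2
      simp at hmem2
    · intro a
      have hva : (vars a).Nonempty := by
        obtain ⟨a0, Y0, hY0⟩ := hne
        rcases Relation.ReflTransGen.cases_tail (hconn a0 a) with h | ⟨c, -, h⟩
        · rw [h]; exact ⟨Y0, hY0⟩
        · obtain ⟨Z, hZ⟩ := h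
          exact ⟨Z, (Finset.mem_inter.1 hZ).2⟩
      have hvW : ∀ x ∈ vars a, x ∈ W := fun x hx => (hW' x).2 ⟨a, hx⟩
      obtain ⟨Y, hYa, hYmax⟩ := (vars a).exists_max_image
          (fun Z => (UU vars W Z).card) hva
      have hYW : Y ∈ W := hvW Y hYa
      have hcomp : ∀ x ∈ vars a, x = Y ∨ L vars Y x := by
        intro x hx
        have hint : (atF vars Y ∩ atF vars x).Nonempty :=
          ⟨a, Finset.mem_inter.2 ⟨mem_atF.2 hYa, mem_atF.2 hx⟩⟩
        rcases L_tric hier hint with h | h | h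
        · exact Or.inr h
        · exact Or.inl h.symm
        · exact absurd (UU_card_lt hYW h) (not_lt.2 (hYmax x hx))
      refine ⟨Y, hYW, ?_⟩
      ext z
      simp only [Set.mem_setOf_eq, Finset.mem_coe]
      constructor
      · rintro ⟨n, rfl⟩
        have hmem := iterate_mem hier hatW n Y hYW
        rcases Finset.mem_insert.1 hmem with h | h
        · rw [h]; exact hYa
        · obtain ⟨-, hL⟩ := mem_UU.1 h
          exact mem_atF.1 (L_mono hL (mem_atF.2 hYa))
      · intro hz
        rcases hcomp z hz with h | h
        · exact ⟨0, h.symm⟩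
        · exact mem_iterate hier hatW _ Y hYW rfl z (mem_UU.2 ⟨hvW z hz, h⟩)
  · intro r p _ _ _ _ hatoms X Y
    by_cases hd : {a | X ∈ vars a} ∩ {a | Y ∈ vars a} = ∅
    · exact Or.inr (Or.inr hd)
    · obtain ⟨a, haX, haY⟩ : ∃ a, X ∈ vars a ∧ Y ∈ vars a := by
        obtain ⟨a, h1, h2⟩ := Set.nonempty_iff_ne_empty.2 hd
        exact ⟨a, h1, h2⟩
      obtain ⟨Z, _, hZ⟩ := hatoms a
      have hX : X ∈ {z : V | ∃ n, p^[n] Z = z} := by rw [hZ]; exact haX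
      have hY : Y ∈ {z : V | ∃ n, p^[n] Z = z} := by rw [hZ]; exact haY
      obtain ⟨m, hm⟩ := hX
      obtain ⟨n, hn⟩ := hY
      rcases le_total m n with hmn | hmn
      · have hk : p^[n - m] X = Y := by
          rw [← hm, ← Function.iterate_add_apply, Nat.sub_add_cancel hmn, hn]
        left
        intro b hb
        obtain ⟨Zb, _, hZb⟩ := hatoms b
        have hXb : X ∈ {z : V | ∃ j, p^[j] Zb = z} := by rw [hZb]; exact hb
        obtain ⟨j, hj⟩ := hXb
        have hYb : Y ∈ {z : V | ∃ j, p^[j] Zb = z} :=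
          ⟨(n - m) + j, by rw [Function.iterate_add_apply, hj, hk]⟩
        rw [hZb] at hYb
        exact hYb
      · have hk : p^[m - n] Y = X := by
          rw [← hn, ← Function.iterate_add_apply, Nat.sub_add_cancel hmn, hm]
        right; left
        intro b hb
        obtain ⟨Zb, _, hZb⟩ := hatoms b
        have hYb : Y ∈ {z : V | ∃ j, p^[j] Zb = z} := by rw [hZb]; exact hb
        obtain ⟨j, hj⟩ := hYb
        have hXb : X ∈ {z : V | ∃ j, p^[j] Zb = z} :=
          ⟨(m - n) + j, by rw [Function.iterate_add_apply, hj, hk]⟩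
        rw [hZb] at hXb
        exact hXb
end
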